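/- The rules of minimal logic hold in the modal base-extension semantics: for every binary relation 𝕽 on bases, every base B, all sets Γ, Δ of modal formulas and all modal formulas φ, ψ: (R) {φ} ⊩_{B,𝕽} φ; (S) if Γ ⊩_{B,𝕽} φ and Γ ⊆ Δ then Δ ⊩_{B,𝕽} φ; (C) if Γ ⊩_{B,𝕽} φ and Γ ∪ {φ} ⊩_{B,𝕽} ψ then Γ ⊩_{B,𝕽} ψ; (→E) {φ→ψ, φ} ⊩_{B,𝕽} ψ; (→I) if Γ ∪ {φ} ⊩_{B,𝕽} ψ then Γ ⊩_{B,𝕽} φ→ψ. -/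

import Mathlib

/-!
Every rule unfolds to the definition of `MCon`, except that `→I` needs validity to be preserved
under base extension. This holds for atoms and `⊥` because closure is monotone in the base, and
for `→` and `□` because their clauses already quantify over all extensions.
-/

/-- A base rule: a pair of a finite set of premiss atoms and a conclusion atom. -/
structure BaseRule (At : Type) where
  prem : Finset At
  concl : At

/-- A base is a set of base rules. -/
abbrev Base (At : Type) := Set (BaseRule At)

/-- The closure of a base `B`: the least set of atoms closed under the rules of `B`. -/
inductive Closure {At : Type} (B : Base At) : At → Prop
  | step (r : BaseRule At) (hr : r ∈ B) (ih : ∀ q ∈ r.prem, Closure B q) :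
      Closure B r.concl

/-- Modal formulas: atoms, falsum, implication and box. -/
inductive MForm (At : Type) where
  | atom : At → MForm At
  | bot  : MForm At
  | imp  : MForm At → MForm At → MForm At
  | box  : MForm At → MForm At

/-- Base-extension validity of a modal formula at a base, given a relation on bases. -/
def MValid {At : Type} (R : Base At → Base At → Prop) : Base At → MForm At → Prop
  | B, .atom p  => Closure B p
  | B, .bot     => ∀ p : At, Closure B p
  | B, .imp φ ψ => ∀ C : Base At, B ⊆ C → MValid R C φ → MValid R C ψ
  | B, .box φ   => ∀ C C' : Base At, B ⊆ C → R C C' → MValid R C' φ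

/-- Base-extension consequence: `Γ ⊩_{B,R} φ`. -/
def MCon {At : Type} (R : Base At → Base At → Prop) (Γ : Set (MForm At))
    (B : Base At) (φ : MForm At) : Prop :=
  ∀ C : Base At, B ⊆ C → (∀ ψ ∈ Γ, MValid R C ψ) → MValid R C φ

/-- A base is inconsistent iff `⊥` is valid at it (a condition independent of `R`). -/
def Inconsistent {At : Type} (B : Base At) : Prop := ∀ p : At, Closure B p

/-- A base is consistent iff it is not inconsistent. -/
def Consistent {At : Type} (B : Base At) : Prop := ¬ Inconsistent B

/-- A base is maximally-consistent iff it is consistent and adding any missing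
base rule makes it inconsistent. -/
def MaxCon {At : Type} (B : Base At) : Prop :=
  Consistent B ∧ ∀ δ : BaseRule At, δ ∈ B ∨ Inconsistent (insert δ B)

/-- A modal relation on bases. -/
structure IsModalRel {At : Type} (R : Base At → Base At → Prop) : Prop where
  a : ∀ B : Base At, Inconsistent B →
        (∃ C : Base At, R B C ∧ Inconsistent C) ∧ ∀ C : Base At, R B C → Inconsistent C
  b : ∀ B : Base At, Consistent B → ∀ C : Base At, R B C → Consistent C
  c : ∀ B C : Base At, Consistent B → R B C →
        MaxCon B ∨ ∃ D : Base At, B ⊂ D ∧ R D C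
  d : ∀ B C : Base At, R B C → ∀ D : Base At, D ⊆ B → R D C

/-- The four modal logics considered. -/
inductive Gamma where
  | K | KT | K4 | S4

/-- Logics whose relations must be reflexive. -/
def Gamma.reflCond (γ : Gamma) : Prop := γ = Gamma.KT ∨ γ = Gamma.S4

/-- Logics whose relations must be transitive. -/
def Gamma.transCond (γ : Gamma) : Prop := γ = Gamma.K4 ∨ γ = Gamma.S4

/-- A `γ`-modal relation: a modal relation satisfying the frame conditions for `γ`. -/
def IsGammaRel {At : Type} (γ : Gamma) (R : Base At → Base At → Prop) : Prop :=
  IsModalRel R ∧ (γ.reflCond → Reflexive R) ∧ (γ.transCond → Transitive R)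

/-- `γ`-validity in the base-extension semantics. -/
def GValid {At : Type} (γ : Gamma) (φ : MForm At) : Prop :=
  ∀ (B : Base At) (R : Base At → Base At → Prop), IsGammaRel γ R → MValid R B φ

theorem Closure.mono {At : Type} {B C : Base At} (hBC : B ⊆ C) {p : At}
    (hp : Closure B p) : Closure C p := by
  induction hp with
  | step r hr _ ih => exact .step r (hBC hr) ih

section BaseExtension

variable {At : Type} {R : Base At → Base At → Prop} {B : Base At}

theorem MValid.mono {C : Base At} (hBC : B ⊆ C) {φ : MForm At} (h : MValid R B φ) :
    MValid R C φ := by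
  cases φ with
  | atom p => exact Closure.mono hBC h
  | bot => exact fun p => Closure.mono hBC (h p)
  | imp φ ψ => exact fun D hCD => h D (hBC.trans hCD)
  | box φ => exact fun D D' hCD => h D D' (hBC.trans hCD)

theorem MCon.refl (φ : MForm At) : MCon R {φ} B φ :=
  fun _ _ h => h φ rfl

theorem MCon.mono {Γ Δ : Set (MForm At)} {φ : MForm At} (h : MCon R Γ B φ) (hΓΔ : Γ ⊆ Δ) :
    MCon R Δ B φ :=
  fun C hBC hΔ => h C hBC fun χ hχ => hΔ χ (hΓΔ hχ)

theorem MCon.cut {Γ : Set (MForm At)} {φ ψ : MForm At} (hφ : MCon R Γ B φ)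
    (hψ : MCon R (Γ ∪ {φ}) B ψ) : MCon R Γ B ψ := by
  intro C hBC hΓ
  refine hψ C hBC fun χ hχ => ?_
  rcases hχ with hχ | rfl
  · exact hΓ χ hχ
  · exact hφ C hBC hΓ

theorem MCon.imp_elim (φ ψ : MForm At) : MCon R {.imp φ ψ, φ} B ψ :=
  fun C _ h => h (.imp φ ψ) (.inl rfl) C le_rfl (h φ (.inr rfl))

theorem MCon.imp_intro {Γ : Set (MForm At)} {φ ψ : MForm At} (h : MCon R (Γ ∪ {φ}) B ψ) :
    MCon R Γ B (.imp φ ψ) := by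
  intro C hBC hΓ D hCD hφ
  refine h D (hBC.trans hCD) fun χ hχ => ?_
  rcases hχ with hχ | rfl
  · exact (hΓ χ hχ).mono hCD
  · exact hφ

end BaseExtension

theorem modal_minimal_logic_general {At : Type}
    (R : Base At → Base At → Prop) (B : Base At)
    (Γ Δ : Set (MForm At)) (φ ψ : MForm At) :
    (MCon R {φ} B φ) ∧
    (MCon R Γ B φ → Γ ⊆ Δ → MCon R Δ B φ) ∧
    (MCon R Γ B φ → MCon R (Γ ∪ {φ}) B ψ → MCon R Γ B ψ) ∧
    (MCon R {MForm.imp φ ψ, φ} B ψ) ∧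
    (MCon R (Γ ∪ {φ}) B ψ → MCon R Γ B (MForm.imp φ ψ)) :=
  ⟨.refl φ, .mono, .cut, .imp_elim φ ψ, .imp_intro⟩

/-- the rules of minimal logic hold in the modal base-extension semantics. -/
theorem modal_minimal_logic {At : Type} [Countable At] [Infinite At]
    (R : Base At → Base At → Prop) (B : Base At)
    (Γ Δ : Set (MForm At)) (φ ψ : MForm At) :
    (MCon R {φ} B φ) ∧
    (MCon R Γ B φ → Γ ⊆ Δ → MCon R Δ B φ) ∧
    (MCon R Γ B φ → MCon R (Γ ∪ {φ}) B ψ → MCon R Γ B ψ) ∧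
    (MCon R {MForm.imp φ ψ, φ} B ψ) ∧
    (MCon R (Γ ∪ {φ}) B ψ → MCon R Γ B (MForm.imp φ ψ)) :=
  modal_minimal_logic_general R B Γ Δ φ ψ
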